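/- Suppose ν is even, P = Pᵀ is entrywise nonnegative and row stochastic, C ∈ ℝ^{n×n} is symmetric negative definite, and −q_i Q ⪯ C for every i ∈ {1,…,N}. Then the mapping A_{ν/2,ν/2}(z) := (P^{ν/2} ⊗ I_n) x⋆((P^{ν/2} ⊗ I_n) z) is firmly nonexpansive in the (I_N ⊗ (−C))-norm: for all r, s ∈ ℝ^{Nn}, ‖A_{ν/2,ν/2}(r) − A_{ν/2,ν/2}(s)‖²_{I_N⊗(−C)} ≤ (r − s)ᵀ (I_N ⊗ (−C)) (A_{ν/2,ν/2}(r) − A_{ν/2,ν/2}(s)). (Proposition 1, statement 3.) -/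

import Mathlib

open Matrix Filter Topology Finset
open scoped Kronecker

noncomputable section

/-- Euclidean norm of a finitely-indexed real vector. -/
def eunorm {ι : Type*} [Fintype ι] (x : ι → ℝ) : ℝ := Real.sqrt (x ⬝ᵥ x)

/-- `S`-weighted norm `‖x‖_S = √(xᵀ S x)`. -/
def wnorm {ι : Type*} [Fintype ι] (S : Matrix ι ι ℝ) (x : ι → ℝ) : ℝ :=
  Real.sqrt (x ⬝ᵥ S.mulVec x)

/-- Quadratic cost `J(x,z) = q·xᵀQx + 2(Cz+c)ᵀx`. -/
def cost {n : ℕ} (Q C : Matrix (Fin n) (Fin n) ℝ) (qi : ℝ) (ci : Fin n → ℝ)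
    (x z : Fin n → ℝ) : ℝ :=
  qi * (x ⬝ᵥ Q.mulVec x) + 2 * ((C.mulVec z + ci) ⬝ᵥ x)

/-- `xst` is the optimal-response map: for every `z`, `xst z` minimizes the cost over `X`. -/
def IsOptResp {n : ℕ} (X : Set (Fin n → ℝ)) (Q C : Matrix (Fin n) (Fin n) ℝ)
    (qi : ℝ) (ci : Fin n → ℝ) (xst : (Fin n → ℝ) → (Fin n → ℝ)) : Prop :=
  ∀ z, xst z ∈ X ∧ ∀ y ∈ X, cost Q C qi ci (xst z) z ≤ cost Q C qi ci y z

/-- Stacked optimal responses `x⋆(z) = (x^{1⋆}(z^1);…;x^{N⋆}(z^N))`. -/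
def extMap {n N : ℕ} (xstar : Fin N → (Fin n → ℝ) → (Fin n → ℝ))
    (z : Fin N × Fin n → ℝ) : Fin N × Fin n → ℝ :=
  fun p => xstar p.1 (fun j => z (p.1, j)) p.2

/-- Extended aggregation map `A_ν(z) = (P^ν ⊗ I_n) x⋆(z)`. -/
def aggMap {n N : ℕ} (P : Matrix (Fin N) (Fin N) ℝ) (ν : ℕ)
    (xstar : Fin N → (Fin n → ℝ) → (Fin n → ℝ)) (z : Fin N × Fin n → ℝ) :
    Fin N × Fin n → ℝ :=
  ((P ^ ν) ⊗ₖ (1 : Matrix (Fin n) (Fin n) ℝ)).mulVec (extMap xstar z)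

/-- The matrix `(1/N)·1_N 1_Nᵀ` with all entries `1/N`. -/
def avgMat (N : ℕ) : Matrix (Fin N) (Fin N) ℝ := Matrix.of fun _ _ => (N : ℝ)⁻¹

/-- Mean-field aggregation map `A(z) = ((1/N)·1 1ᵀ ⊗ I_n) x⋆(z)`. -/
def meanAgg {n N : ℕ} (xstar : Fin N → (Fin n → ℝ) → (Fin n → ℝ))
    (z : Fin N × Fin n → ℝ) : Fin N × Fin n → ℝ :=
  ((avgMat N) ⊗ₖ (1 : Matrix (Fin n) (Fin n) ℝ)).mulVec (extMap xstar z)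

/-- Maximum-row-sum matrix norm `‖A‖_∞`. -/
def rowSumNorm {N : ℕ} (A : Matrix (Fin N) (Fin N) ℝ) : ℝ := ⨆ i, ∑ j, |A i j|

/-- Spectral norm (ℓ²-operator norm) of a real matrix. -/
def specNorm {ι : Type*} [Fintype ι] [DecidableEq ι] (P : Matrix ι ι ℝ) : ℝ :=
  ‖LinearMap.toContinuousLinearMap (Matrix.toEuclideanLin P)‖

/-- Map `A_{m,m}(z) = (P^m ⊗ I_n) x⋆((P^m ⊗ I_n) z)`. -/
def halfAgg {n N : ℕ} (P : Matrix (Fin N) (Fin N) ℝ) (m : ℕ)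
    (xstar : Fin N → (Fin n → ℝ) → (Fin n → ℝ)) (z : Fin N × Fin n → ℝ) :
    Fin N × Fin n → ℝ :=
  ((P ^ m) ⊗ₖ (1 : Matrix (Fin n) (Fin n) ℝ)).mulVec
    (extMap xstar (((P ^ m) ⊗ₖ (1 : Matrix (Fin n) (Fin n) ℝ)).mulVec z))

/-!
Each optimal response is firmly nonexpansive in the `(-C)`-norm: adding the variational
inequalities at two points gives `q_i ‖Δx‖²_Q ≤ ⟪Δz, Δx⟫_{-C}`, and `-q_i Q ⪯ C` bounds
`‖Δx‖²_{-C}` by the left-hand side. Stacking the responses gives a firmly nonexpansive map for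
`S = I_N ⊗ (-C)`. Conjugating it by the symmetric `K = P^{ν/2} ⊗ I_n` preserves this, since `K`
commutes with `S` and `K S K ⪯ S`: a doubly stochastic matrix is a contraction in `ℓ²`, by
Jensen's inequality applied row by row.
-/

section

variable {ι κ : Type*} [Fintype ι] [Fintype κ]

lemma Matrix.IsSymm.dotProduct_mulVec_comm {R : Type*} [CommSemiring R] {A : Matrix ι ι R}
    (hA : A.IsSymm) (u v : ι → R) : u ⬝ᵥ A *ᵥ v = A *ᵥ u ⬝ᵥ v := by
  rw [← dotProduct_transpose_mulVec, hA.eq, dotProduct_comm]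

lemma Matrix.dotProduct_one_kronecker_mulVec {R : Type*} [CommSemiring R] [DecidableEq ι]
    (B : Matrix κ κ R) (u v : ι × κ → R) :
    u ⬝ᵥ ((1 : Matrix ι ι R) ⊗ₖ B) *ᵥ v = ∑ i, (fun k => u (i, k)) ⬝ᵥ B *ᵥ fun k => v (i, k) := by
  simp [dotProduct, mulVec, Fintype.sum_prod_type, one_apply, ite_mul, mul_sum]

lemma wnorm_sq {S : Matrix ι ι ℝ} (hS : S.PosSemidef) (v : ι → ℝ) :
    wnorm S v ^ 2 = v ⬝ᵥ S *ᵥ v :=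
  Real.sq_sqrt (by simpa using hS.dotProduct_mulVec_nonneg v)

lemma Matrix.dotProduct_mulVec_self_le_of_mem_doublyStochastic [DecidableEq ι] {M : Matrix ι ι ℝ}
    (hM : M ∈ doublyStochastic ℝ ι) (x : ι → ℝ) : M *ᵥ x ⬝ᵥ M *ᵥ x ≤ x ⬝ᵥ x := by
  have jensen (i : ι) : (M *ᵥ x) i ^ 2 ≤ ∑ j, M i j * x j ^ 2 := by
    simpa [mulVec, dotProduct] using
      even_two.convexOn_pow.map_sum_le (t := univ) (w := M i) (p := x)
        (fun j _ => nonneg_of_mem_doublyStochastic hM) (sum_row_of_mem_doublyStochastic hM i)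
        (by simp)
  calc M *ᵥ x ⬝ᵥ M *ᵥ x = ∑ i, (M *ᵥ x) i ^ 2 := by simp [dotProduct, sq]
    _ ≤ ∑ i, ∑ j, M i j * x j ^ 2 := sum_le_sum fun i _ => jensen i
    _ = ∑ j, (∑ i, M i j) * x j ^ 2 := by rw [sum_comm]; simp [sum_mul]
    _ = x ⬝ᵥ x := by simp [sum_col_of_mem_doublyStochastic hM, dotProduct, sq]

lemma Matrix.posSemidef_one_sub_transpose_mul_self_of_mem_doublyStochastic [DecidableEq ι]
    {M : Matrix ι ι ℝ} (hM : M ∈ doublyStochastic ℝ ι) : (1 - Mᵀ * M).PosSemidef := by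
  refine .of_dotProduct_mulVec_nonneg ?_ fun x => ?_
  · simp [IsHermitian, transpose_sub, transpose_mul]
  · have hle := dotProduct_mulVec_self_le_of_mem_doublyStochastic hM x
    rw [star_trivial, sub_mulVec, one_mulVec, dotProduct_sub, ← mulVec_mulVec,
      dotProduct_transpose_mulVec]
    linarith

def IsFirmlyNonexpansive (S : Matrix ι ι ℝ) (T : (ι → ℝ) → ι → ℝ) : Prop :=
  ∀ u v, (T u - T v) ⬝ᵥ S *ᵥ (T u - T v) ≤ (u - v) ⬝ᵥ S *ᵥ (T u - T v)

lemma IsFirmlyNonexpansive.conj {S K : Matrix ι ι ℝ} {T : (ι → ℝ) → ι → ℝ}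
    (hT : IsFirmlyNonexpansive S T) (hK : K.IsSymm) (hSK : S * K = K * S)
    (hKSK : ∀ v, v ⬝ᵥ (K * S * K) *ᵥ v ≤ v ⬝ᵥ S *ᵥ v) :
    IsFirmlyNonexpansive S fun z => K *ᵥ T (K *ᵥ z) := by
  intro r s
  set Δ := T (K *ᵥ r) - T (K *ᵥ s)
  rw [← mulVec_sub]
  calc K *ᵥ Δ ⬝ᵥ S *ᵥ (K *ᵥ Δ) = Δ ⬝ᵥ (K * S * K) *ᵥ Δ := by
        rw [← hK.dotProduct_mulVec_comm, mulVec_mulVec, mulVec_mulVec, mul_assoc]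
    _ ≤ Δ ⬝ᵥ S *ᵥ Δ := hKSK Δ
    _ ≤ (K *ᵥ r - K *ᵥ s) ⬝ᵥ S *ᵥ Δ := hT _ _
    _ = (r - s) ⬝ᵥ S *ᵥ (K *ᵥ Δ) := by
        rw [← mulVec_sub, ← hK.dotProduct_mulVec_comm, mulVec_mulVec, mulVec_mulVec, hSK]

lemma IsFirmlyNonexpansive.kronecker_conj [DecidableEq ι] [DecidableEq κ] {M : Matrix ι ι ℝ}
    {B : Matrix κ κ ℝ} {T : (ι × κ → ℝ) → ι × κ → ℝ}
    (hT : IsFirmlyNonexpansive ((1 : Matrix ι ι ℝ) ⊗ₖ B) T) (hM : M.IsSymm)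
    (hMM : (1 - M * M).PosSemidef) (hB : B.PosSemidef) :
    IsFirmlyNonexpansive ((1 : Matrix ι ι ℝ) ⊗ₖ B)
      fun z => (M ⊗ₖ (1 : Matrix κ κ ℝ)) *ᵥ T ((M ⊗ₖ (1 : Matrix κ κ ℝ)) *ᵥ z) := by
  refine hT.conj ?_ ?_ fun v => ?_
  · rw [IsSymm, ← kroneckerMap_transpose, hM.eq, transpose_one]
  · simp [← mul_kronecker_mul]
  · have hsplit : (1 : Matrix ι ι ℝ) ⊗ₖ B
        = (1 - M * M) ⊗ₖ B + (M ⊗ₖ 1) * (1 ⊗ₖ B) * (M ⊗ₖ (1 : Matrix κ κ ℝ)) := by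
      simp [← mul_kronecker_mul, ← add_kronecker]
    have hpsd := (hMM.kronecker hB).dotProduct_mulVec_nonneg v
    rw [star_trivial] at hpsd
    calc _ ≤ v ⬝ᵥ ((1 - M * M) ⊗ₖ B) *ᵥ v + v ⬝ᵥ ((M ⊗ₖ 1) * (1 ⊗ₖ B) * (M ⊗ₖ 1)) *ᵥ v :=
          le_add_of_nonneg_left hpsd
      _ = _ := by rw [← dotProduct_add, ← add_mulVec, ← hsplit]

end

lemma nonneg_of_forall_mul_add_sq_mul_nonneg {a b : ℝ}
    (h : ∀ t ∈ Set.Ioc (0 : ℝ) 1, 0 ≤ t * b + t ^ 2 * a) : 0 ≤ b := by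
  have hlim : Tendsto (fun t => b + t * a) (𝓝[>] 0) (𝓝 b) := by
    refine ((by fun_prop : Continuous fun t : ℝ => b + t * a).tendsto' 0 b ?_).mono_left
      nhdsWithin_le_nhds
    simp
  refine ge_of_tendsto hlim (eventually_of_mem (Ioc_mem_nhdsGT zero_lt_one) fun t ht => ?_)
  exact nonneg_of_mul_nonneg_right (by linear_combination h t ht) ht.1

section OptimalResponse

variable {n : ℕ} {X : Set (Fin n → ℝ)} {Q C : Matrix (Fin n) (Fin n) ℝ} {qi : ℝ}
  {ci : Fin n → ℝ} {xst : (Fin n → ℝ) → Fin n → ℝ}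

lemma IsOptResp.variational_ineq (h : IsOptResp X Q C qi ci xst) (hX : Convex ℝ X)
    (z : Fin n → ℝ) {y : Fin n → ℝ} (hy : y ∈ X) :
    0 ≤ qi * (xst z ⬝ᵥ Q *ᵥ (y - xst z) + (y - xst z) ⬝ᵥ Q *ᵥ xst z)
      + 2 * ((C *ᵥ z + ci) ⬝ᵥ (y - xst z)) := by
  set x := xst z
  set d := y - x
  refine nonneg_of_forall_mul_add_sq_mul_nonneg (a := qi * (d ⬝ᵥ Q *ᵥ d)) fun t ht => ?_
  have hmem : x + t • d ∈ X := hX.add_smul_sub_mem (h z).1 hy ⟨ht.1.le, ht.2⟩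
  -- `J (x + t • d) = J x + t * (claimed quantity) + t ^ 2 * a`, and `x` minimizes `J` on `X`.
  have hmin := (h z).2 _ hmem
  simp only [cost, mulVec_add, mulVec_smul, dotProduct_add, add_dotProduct, dotProduct_smul,
    smul_dotProduct, smul_eq_mul] at hmin ⊢
  linear_combination hmin

lemma IsOptResp.isFirmlyNonexpansive (h : IsOptResp X Q C qi ci xst) (hX : Convex ℝ X)
    (hC : C.IsSymm) (hqQC : (qi • Q + C).PosSemidef) : IsFirmlyNonexpansive (-C) xst := by
  intro z z'
  have vi := h.variational_ineq hX z (h z').1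
  have vi' := h.variational_ineq hX z' (h z).1
  have psd := hqQC.dotProduct_mulVec_nonneg (xst z - xst z')
  rw [star_trivial] at psd
  simp only [sub_dotProduct, dotProduct_sub, dotProduct_add, add_dotProduct, mulVec_sub, add_mulVec,
    neg_mulVec, dotProduct_neg, smul_mulVec, dotProduct_smul, smul_eq_mul,
    ← hC.dotProduct_mulVec_comm] at vi vi' psd ⊢
  linear_combination (vi + vi') / 2 + psd

end OptimalResponse

lemma isFirmlyNonexpansive_extMap {n N : ℕ} {B : Matrix (Fin n) (Fin n) ℝ}
    {xstar : Fin N → (Fin n → ℝ) → Fin n → ℝ} (h : ∀ i, IsFirmlyNonexpansive B (xstar i)) :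
    IsFirmlyNonexpansive ((1 : Matrix (Fin N) (Fin N) ℝ) ⊗ₖ B) (extMap xstar) := by
  intro u v
  simp only [dotProduct_one_kronecker_mulVec]
  exact sum_le_sum fun i _ => h i (fun k => u (i, k)) (fun k => v (i, k))

theorem halfAgg_firmlyNonexpansive_general {n N ν : ℕ}
    (X : Fin N → Set (Fin n → ℝ))
    (hXconv : ∀ i, Convex ℝ (X i))
    (Q C : Matrix (Fin n) (Fin n) ℝ)
    (q : Fin N → ℝ) (c : Fin N → Fin n → ℝ)
    (P : Matrix (Fin N) (Fin N) ℝ) (hPnn : ∀ i j, 0 ≤ P i j)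
    (hPrs : ∀ i, ∑ j, P i j = 1) (hPsym : P.IsSymm)
    (hC : (-C).PosDef) (hqQC : ∀ i, (q i • Q + C).PosSemidef)
    (xstar : Fin N → (Fin n → ℝ) → (Fin n → ℝ))
    (hxstar : ∀ i, IsOptResp (X i) Q C (q i) (c i) (xstar i)) :
    ∀ r s : Fin N × Fin n → ℝ,
      wnorm ((1 : Matrix (Fin N) (Fin N) ℝ) ⊗ₖ (-C))
          (halfAgg P (ν / 2) xstar r - halfAgg P (ν / 2) xstar s) ^ 2
        ≤ (r - s) ⬝ᵥ (((1 : Matrix (Fin N) (Fin N) ℝ) ⊗ₖ (-C)).mulVec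
            (halfAgg P (ν / 2) xstar r - halfAgg P (ν / 2) xstar s)) := by
  have hCsym : C.IsSymm := isSymm_neg_iff.1 (isHermitian_iff_isSymm.1 hC.isHermitian)
  have hP : P ∈ doublyStochastic ℝ (Fin N) :=
    mem_doublyStochastic_iff_sum.2 ⟨hPnn, hPrs, fun j => by simpa [hPsym.apply] using hPrs j⟩
  have hPm : (P ^ (ν / 2)).IsSymm := hPsym.pow _
  have hcontr : (1 - P ^ (ν / 2) * P ^ (ν / 2)).PosSemidef := by
    simpa [hPm.eq] using
      posSemidef_one_sub_transpose_mul_self_of_mem_doublyStochastic (pow_mem hP (ν / 2))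
  have hextMap := isFirmlyNonexpansive_extMap fun i =>
    (hxstar i).isFirmlyNonexpansive (hXconv i) hCsym (hqQC i)
  intro r s
  rw [wnorm_sq (PosSemidef.one.kronecker hC.posSemidef)]
  exact hextMap.kronecker_conj hPm hcontr hC.posSemidef r s

/-- Proposition 1, statement 3: if `ν` is even, `P = Pᵀ` row stochastic,
`C` symmetric negative definite and `−q_i Q ⪯ C` for all `i`, then `A_{ν/2,ν/2}` is
firmly nonexpansive in the `(I_N ⊗ (−C))`-norm. -/
theorem halfAgg_firmlyNonexpansive {n N ν : ℕ} (hn : 0 < n) (hN : 0 < N) (hν : 0 < ν)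
    (hνeven : Even ν)
    (X : Fin N → Set (Fin n → ℝ))
    (hXne : ∀ i, (X i).Nonempty) (hXconv : ∀ i, Convex ℝ (X i))
    (hXcpt : ∀ i, IsCompact (X i))
    (Q C : Matrix (Fin n) (Fin n) ℝ) (hQ : Q.PosDef)
    (q : Fin N → ℝ) (hq : ∀ i, 0 < q i) (c : Fin N → Fin n → ℝ)
    (P : Matrix (Fin N) (Fin N) ℝ) (hPnn : ∀ i j, 0 ≤ P i j)
    (hPrs : ∀ i, ∑ j, P i j = 1) (hPsym : P.IsSymm)
    (hC : (-C).PosDef) (hqQC : ∀ i, (q i • Q + C).PosSemidef)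
    (xstar : Fin N → (Fin n → ℝ) → (Fin n → ℝ))
    (hxstar : ∀ i, IsOptResp (X i) Q C (q i) (c i) (xstar i)) :
    ∀ r s : Fin N × Fin n → ℝ,
      wnorm ((1 : Matrix (Fin N) (Fin N) ℝ) ⊗ₖ (-C))
          (halfAgg P (ν / 2) xstar r - halfAgg P (ν / 2) xstar s) ^ 2
        ≤ (r - s) ⬝ᵥ (((1 : Matrix (Fin N) (Fin N) ℝ) ⊗ₖ (-C)).mulVec
            (halfAgg P (ν / 2) xstar r - halfAgg P (ν / 2) xstar s)) :=
  halfAgg_firmlyNonexpansive_general X hXconv Q C q c P hPnn hPrs hPsym hC hqQC xstar hxstar
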